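/- arXiv:1209.4956 — 3 statements merged into one kernel-verified Lean document; each statement's English description precedes it below -/
import Mathlib

section
/- Relation (B2): Let u be a 0-grassmannian affine permutation and let a < b, c < d be integers with b − a ≤ k, d − c ≤ k. If either (a ≡ c (mod n) and b ≤ d) or (b ≡ d (mod n) and c ≤ a), then the composite u·t_{a,b}·t_{c,d} is not defined. -/
open Function

/-- The affine transposition `t_{a,b}` of period `n`: it exchanges `a + m*n` and
`b + m*n` for every `m : ℤ` and fixes all other integers. -/
def affT (n a b : ℤ) : ℤ → ℤ := fun i =>
  if (i - a) % n = 0 then i - a + b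
  else if (i - b) % n = 0 then i - b + a
  else i

/-- `u` is an affine permutation of period `n`: a bijection of `ℤ` with
`u (i + n) = u i + n` and `∑_{i=1}^{n} u i = n (n+1) / 2`. -/
def IsAffinePerm (n : ℤ) (u : ℤ → ℤ) : Prop :=
  Function.Bijective u ∧ (∀ i : ℤ, u (i + n) = u i + n) ∧
    ∑ i ∈ Finset.Icc (1 : ℤ) n, u i = n * (n + 1) / 2

/-- The operator `t_{a,b}` is defined at `u`:
`u a ≤ 0 < u b` and for every `a < i < b`, either `u i < u a` or `u i > u b`. -/
def DefinedAt (u : ℤ → ℤ) (a b : ℤ) : Prop :=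
  u a ≤ 0 ∧ 0 < u b ∧ ∀ i : ℤ, a < i → i < b → u i < u a ∨ u b < u i

/-- `u` is 0-grassmannian: the positions of the values `1, 2, …, n` under `u`
appear in increasing order, i.e. `u⁻¹ 1 < u⁻¹ 2 < ⋯ < u⁻¹ n`. -/
def IsGrassmannian (n : ℤ) (u : ℤ → ℤ) : Prop :=
  ∀ i j p q : ℤ, 1 ≤ i → i < j → j ≤ n → u p = i → u q = j → p < q

/-- The composite `u · t_{a,b} · t_{c,d}` is defined. -/
def Def2 (n : ℤ) (u : ℤ → ℤ) (a b c d : ℤ) : Prop :=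
  DefinedAt u a b ∧ DefinedAt (u ∘ affT n a b) c d

/-- The composite `u · t_{a₁,b₁} · t_{a₂,b₂} · t_{a₃,b₃}` is defined. -/
def Def3 (n : ℤ) (u : ℤ → ℤ) (a₁ b₁ a₂ b₂ a₃ b₃ : ℤ) : Prop :=
  DefinedAt u a₁ b₁ ∧ DefinedAt (u ∘ affT n a₁ b₁) a₂ b₂ ∧
    DefinedAt ((u ∘ affT n a₁ b₁) ∘ affT n a₂ b₂) a₃ b₃

/-! Write `v = u ∘ t_{a,b}`. If `c = a + m n`, then `v c = u b + m n`, and `v c ≤ 0 < u b` forces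
`m < 0`, so `c ≤ a - n` and the window `[c, d] ⊇ [a - n, b]` is longer than `k`. Symmetrically, if
`d = b + m n`, then `v d = u a + m n`, and `u a ≤ 0 < v d` forces `m > 0`, so `d ≥ b + n`. -/

theorem apply_add_mul_of_apply_add {u : ℤ → ℤ} {n : ℤ} (hper : ∀ i, u (i + n) = u i + n)
    (i m : ℤ) : u (i + m * n) = u i + m * n := by
  have hp : Periodic (fun i => u i - i) n := fun i => by simp only [hper]; ring
  have := hp.int_mul m i
  rw [Int.cast_id] at this
  linarith

theorem affT_add_mul_left (n a b m : ℤ) : affT n a b (a + m * n) = b + m * n := by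
  simp only [affT, add_sub_cancel_left, Int.mul_emod_left, ↓reduceIte]
  ring

theorem affT_add_mul_right {n a b : ℤ} (h : ¬ n ∣ b - a) (m : ℤ) :
    affT n a b (b + m * n) = a + m * n := by
  have : ¬ (b + m * n - a) % n = 0 := by
    rwa [show b + m * n - a = b - a + m * n by ring, Int.add_mul_emod_self_right,
      ← Int.dvd_iff_emod_eq_zero]
  simp only [affT, this, ↓reduceIte, add_sub_cancel_left, Int.mul_emod_left]
  ring

theorem DefinedAt.not_definedAt_comp_affT_of_modEq_left {n : ℤ} {u : ℤ → ℤ} {a b c d : ℤ}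
    (hn : 0 < n) (hper : ∀ i, u (i + n) = u i + n) (huab : DefinedAt u a b)
    (hac : a ≡ c [ZMOD n]) (hab : a < b) (hbd : b ≤ d) (hdc : d - c < n) :
    ¬ DefinedAt (u ∘ affT n a b) c d := by
  rintro ⟨hvc, -, -⟩
  obtain ⟨m, hm⟩ := hac.dvd
  have hc : c = a + m * n := by linarith
  rw [comp_apply, hc, affT_add_mul_left, apply_add_mul_of_apply_add hper] at hvc
  have hm_neg : m < 0 := neg_of_mul_neg_left (by linarith [huab.2.1]) hn.le
  have : m * n ≤ -1 * n := mul_le_mul_of_nonneg_right (by omega) hn.le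
  omega

theorem DefinedAt.not_definedAt_comp_affT_of_modEq_right {n : ℤ} {u : ℤ → ℤ} {a b c d : ℤ}
    (hper : ∀ i, u (i + n) = u i + n) (huab : DefinedAt u a b)
    (hbd : b ≡ d [ZMOD n]) (hab : a < b) (hba : b - a < n) (hca : c ≤ a) (hdc : d - c < n) :
    ¬ DefinedAt (u ∘ affT n a b) c d := by
  rintro ⟨-, hvd, -⟩
  have hn : 0 < n := by omega
  obtain ⟨m, hm⟩ := hbd.dvd
  have hd : d = b + m * n := by linarith
  have hndvd : ¬ n ∣ b - a := fun h => absurd (Int.le_of_dvd (by omega) h) (by omega)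
  rw [comp_apply, hd, affT_add_mul_right hndvd, apply_add_mul_of_apply_add hper] at hvd
  have hm_pos : 0 < m := pos_of_mul_pos_left (by linarith [huab.1]) hn.le
  have : 1 * n ≤ m * n := mul_le_mul_of_nonneg_right (by omega) hn.le
  omega

theorem stmt5_general (k : ℤ) (u : ℤ → ℤ)
    (hu : IsAffinePerm (k + 1) u)
    (a b c d : ℤ) (hab : a < b) (hba : b - a ≤ k) (hdc : d - c ≤ k)
    (h : (a % (k + 1) = c % (k + 1) ∧ b ≤ d) ∨ (b % (k + 1) = d % (k + 1) ∧ c ≤ a)) :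
    ¬ Def2 (k + 1) u a b c d := by
  rintro ⟨huab, hv⟩
  obtain ⟨-, hper, -⟩ := hu
  rcases h with ⟨hac, hbd⟩ | ⟨hbd, hca⟩
  · exact huab.not_definedAt_comp_affT_of_modEq_left (by omega) hper hac hab hbd (by omega) hv
  · exact huab.not_definedAt_comp_affT_of_modEq_right hper hbd hab (by omega) hca (by omega) hv

theorem stmt5 (k : ℤ) (hk : 1 ≤ k) (u : ℤ → ℤ)
    (hu : IsAffinePerm (k + 1) u) (hg : IsGrassmannian (k + 1) u)
    (a b c d : ℤ) (hab : a < b) (hba : b - a ≤ k) (hcd : c < d) (hdc : d - c ≤ k)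
    (h : (a % (k + 1) = c % (k + 1) ∧ b ≤ d) ∨ (b % (k + 1) = d % (k + 1) ∧ c ≤ a)) :
    ¬ Def2 (k + 1) u a b c d :=
  stmt5_general k u hu a b c d hab hba hdc h
end

section
/- Relation (C1): Let u be a 0-grassmannian affine permutation, let a < b be integers with b − a ≤ k, and set d = a + n. If t_{a,b} is defined at u, then the composite u·t_{a,b}·t_{b,d} is defined if and only if the composite u·t_{a,b}·t_{b−n,a} is defined, and in that case the two resulting affine permutations are equal. -/
open Function

/-!
Write `n = k + 1` and `v = u · t_{a,b}`. The transposition `t_{a,b}` only moves the classes of `a`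
and `b` mod `n`, so `v` agrees with `u` strictly between `b - n` and `a` and strictly between `b`
and `a + n`, while `v a = u b`, `v b = u a`. Since `u (i + n) = u i + n`, the conditions defining
`t_{b,a+n}` and `t_{b-n,a}` at `v` are translates of each other by `n`, given `u a ≤ 0 < u b`.
Finally `t_{b,a+n} = t_{b-n,a}`, as shifting both points of a transposition by `n` does not change it.
-/

lemma emod_ne_zero_of_abs_lt {x n : ℤ} (hx : x ≠ 0) (h : |x| < n) : x % n ≠ 0 :=
  fun h0 => hx (Int.eq_zero_of_abs_lt_dvd (Int.dvd_of_emod_eq_zero h0) h)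

lemma affT_add_add (n a b : ℤ) : affT n (a + n) (b + n) = affT n a b := by
  funext i
  simp only [affT, show ∀ c, i - (c + n) = i - c - n from fun c => by ring, Int.sub_emod_right]
  split_ifs <;> ring

lemma affT_add_period (n a b i : ℤ) : affT n a b (i + n) = affT n a b i + n := by
  simp only [affT, show ∀ c, i + n - c = i - c + n from fun c => by ring, Int.add_emod_right]
  split_ifs <;> ring

lemma affT_apply_left (n a b : ℤ) : affT n a b a = b := by
  simp [affT]

lemma affT_apply_right {n a b : ℤ} (hab : (b - a) % n ≠ 0) : affT n a b b = a := by
  simp [affT, hab]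

lemma affT_apply_of_abs_lt {n a b i : ℤ} (ha : i ≠ a) (hb : i ≠ b) (ha' : |i - a| < n)
    (hb' : |i - b| < n) : affT n a b i = i := by
  simp [affT, emod_ne_zero_of_abs_lt (sub_ne_zero.mpr ha) ha',
    emod_ne_zero_of_abs_lt (sub_ne_zero.mpr hb) hb']

theorem definedAt_comp_affT_iff {n a b : ℤ} {u : ℤ → ℤ} (hu : ∀ i, u (i + n) = u i + n)
    (hab : 0 < b - a) (hba : b - a < n) (hdef : DefinedAt u a b) :
    DefinedAt (u ∘ affT n a b) b (a + n) ↔ DefinedAt (u ∘ affT n a b) (b - n) a := by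
  obtain ⟨hua, hub, -⟩ := hdef
  have hu_sub : ∀ i, u (i - n) = u i - n := fun i => by
    have := hu (i - n)
    rw [sub_add_cancel] at this
    omega
  have hb : affT n a b b = a := affT_apply_right (emod_ne_zero_of_abs_lt (by omega) (by
    rw [abs_lt]; omega))
  have hb_sub : affT n a b (b - n) = a - n := by
    have := affT_add_period n a b (b - n)
    rw [sub_add_cancel, hb] at this
    omega
  have hfix : ∀ i, b - n < i → i < a + n → i ≠ a → i ≠ b → u (affT n a b i) = u i := by
    intro i h₁ h₂ hia hib
    rw [affT_apply_of_abs_lt hia hib (abs_lt.mpr ⟨by omega, by omega⟩)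
      (abs_lt.mpr ⟨by omega, by omega⟩)]
  simp only [DefinedAt, comp_apply, affT_add_period, affT_apply_left, hb, hb_sub, hu, hu_sub]
  constructor
  · rintro ⟨-, -, hmid⟩
    refine ⟨by omega, hub, fun i h₁ h₂ => ?_⟩
    have := hmid (i + n) (by omega) (by omega)
    rw [hfix (i + n) (by omega) (by omega) (by omega) (by omega), hu] at this
    rw [hfix i (by omega) (by omega) (by omega) (by omega)]
    omega
  · rintro ⟨-, -, hmid⟩
    refine ⟨hua, by omega, fun i h₁ h₂ => ?_⟩
    have := hmid (i - n) (by omega) (by omega)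
    rw [hfix (i - n) (by omega) (by omega) (by omega) (by omega), hu_sub] at this
    rw [hfix i (by omega) (by omega) (by omega) (by omega)]
    omega

theorem stmt6_general (k : ℤ) (u : ℤ → ℤ)
    (hu : IsAffinePerm (k + 1) u)
    (a b : ℤ) (hab : a < b) (hba : b - a ≤ k)
    (hdef : DefinedAt u a b) :
    (Def2 (k + 1) u a b b (a + (k + 1)) ↔ Def2 (k + 1) u a b (b - (k + 1)) a) ∧
      (Def2 (k + 1) u a b b (a + (k + 1)) →
        (u ∘ affT (k + 1) a b) ∘ affT (k + 1) b (a + (k + 1)) =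
          (u ∘ affT (k + 1) a b) ∘ affT (k + 1) (b - (k + 1)) a) := by
  have h_swap : affT (k + 1) b (a + (k + 1)) = affT (k + 1) (b - (k + 1)) a := by
    rw [← affT_add_add (k + 1) (b - (k + 1)) a, sub_add_cancel]
  exact ⟨and_congr_right' (definedAt_comp_affT_iff hu.2.1 (by omega) (by omega) hdef),
    fun _ => by rw [h_swap]⟩

theorem stmt6 (k : ℤ) (hk : 1 ≤ k) (u : ℤ → ℤ)
    (hu : IsAffinePerm (k + 1) u) (hg : IsGrassmannian (k + 1) u)
    (a b : ℤ) (hab : a < b) (hba : b - a ≤ k)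
    (hdef : DefinedAt u a b) :
    (Def2 (k + 1) u a b b (a + (k + 1)) ↔ Def2 (k + 1) u a b (b - (k + 1)) a) ∧
      (Def2 (k + 1) u a b b (a + (k + 1)) →
        (u ∘ affT (k + 1) a b) ∘ affT (k + 1) b (a + (k + 1)) =
          (u ∘ affT (k + 1) a b) ∘ affT (k + 1) (b - (k + 1)) a) :=
  stmt6_general k u hu a b hab hba hdef
end

section
/- Relation (X6): Let u be a 0-grassmannian affine permutation and let a < b < c < d be integers with b − a ≤ k and d − c ≤ k. Suppose b ≡ d (mod n), b − a < d − c, and u(a) ≤ 0. If the composite u·t_{a,b}·t_{c,d} is defined, then the composite u·t_{c, d−b+a}·t_{a,b} is defined and the two resulting affine permutations are equal. -/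
open Function

/-!
Put `e = d - b + a`, so that `e ≡ a` and `d ≡ b` modulo `n`, while `c` is congruent to neither
`a` nor `b`. Then conjugating `t_{c,d}` by `t_{a,b}` gives `t_{c,e}`, which is the equality of the
two composites. For definedness: `t_{a,b}` fixes `c` and every point of `(c, e)` and sends `d`
to `e`, so the condition for `t_{c,d}` at `u·t_{a,b}` restricts to the one for `t_{c,e}` at `u`.
A point `i ∈ (a, b)` is handled through its translate `i + (d - b) ∈ (e, d)`, where the condition
for `t_{c,d}` at `u·t_{a,b}` applies and `u (i + (d - b)) = u i + (d - b)` by periodicity.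
-/

lemma Int.not_modEq_of_lt_of_lt_add {n x y : ℤ} (h₁ : x < y) (h₂ : y < x + n) :
    ¬ x ≡ y [ZMOD n] := fun h => by
  have := Int.eq_zero_of_dvd_of_nonneg_of_lt (by omega) (by omega) h.dvd
  omega

lemma Int.ModEq.sub_add_modEq {n x a : ℤ} (h : x ≡ a [ZMOD n]) (b : ℤ) :
    x - a + b ≡ b [ZMOD n] := by
  simpa using (h.sub_right a).add_right b

lemma map_sub_self_eq_of_modEq {n : ℤ} {u : ℤ → ℤ} (hu : ∀ i, u (i + n) = u i + n)
    {i j : ℤ} (h : i ≡ j [ZMOD n]) : u j - j = u i - i := by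
  have hper : Periodic (fun x => u x - x) n := fun x => by simp only [hu]; ring
  obtain ⟨t, rfl⟩ := Int.modEq_iff_add_fac.mp h
  simpa [mul_comm] using hper.int_mul t i

section affT

variable {n a b i : ℤ}

lemma affT_apply_of_modEq_left (h : i ≡ a [ZMOD n]) : affT n a b i = i - a + b := by
  rw [affT, if_pos (Int.emod_eq_emod_iff_emod_sub_eq_zero.mp h)]

lemma affT_apply_of_modEq_right (ha : ¬ i ≡ a [ZMOD n]) (hb : i ≡ b [ZMOD n]) :
    affT n a b i = i - b + a := by
  rw [affT, if_neg (mt Int.emod_eq_emod_iff_emod_sub_eq_zero.mpr ha),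
    if_pos (Int.emod_eq_emod_iff_emod_sub_eq_zero.mp hb)]

lemma affT_apply_of_not_modEq (ha : ¬ i ≡ a [ZMOD n]) (hb : ¬ i ≡ b [ZMOD n]) :
    affT n a b i = i := by
  rw [affT, if_neg (mt Int.emod_eq_emod_iff_emod_sub_eq_zero.mpr ha),
    if_neg (mt Int.emod_eq_emod_iff_emod_sub_eq_zero.mpr hb)]

end affT

theorem affT_comp_affT_of_modEq {n a b c d : ℤ} (hab : ¬ a ≡ b [ZMOD n])
    (hca : ¬ c ≡ a [ZMOD n]) (hcb : ¬ c ≡ b [ZMOD n]) (hdb : d ≡ b [ZMOD n]) :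
    affT n a b ∘ affT n c d = affT n c (d - b + a) ∘ affT n a b := by
  have hea := hdb.sub_add_modEq a
  funext i
  simp only [comp_apply]
  by_cases hia : i ≡ a [ZMOD n]
  · have hx := hia.sub_add_modEq b
    rw [affT_apply_of_not_modEq (fun h => hca (h.symm.trans hia))
        (fun h => hab (hia.symm.trans (h.trans hdb))),
      affT_apply_of_modEq_left hia,
      affT_apply_of_not_modEq (fun h => hcb (h.symm.trans hx))
        (fun h => hab ((hea.symm.trans h.symm).trans hx))]
  by_cases hib : i ≡ b [ZMOD n]
  · have hid : i ≡ d [ZMOD n] := hib.trans hdb.symm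
    have hic := hid.sub_add_modEq c
    have hie := hib.sub_add_modEq a
    rw [affT_apply_of_modEq_right (fun h => hcb (h.symm.trans hib)) hid,
      affT_apply_of_not_modEq (fun h => hca (hic.symm.trans h)) (fun h => hcb (hic.symm.trans h)),
      affT_apply_of_modEq_right hia hib,
      affT_apply_of_modEq_right (fun h => hca (h.symm.trans hie)) (hie.trans hea.symm)]
    ring
  by_cases hic : i ≡ c [ZMOD n]
  · have hid := hic.sub_add_modEq d
    rw [affT_apply_of_modEq_left hic,
      affT_apply_of_modEq_right (fun h => hab ((h.symm.trans hid).trans hdb)) (hid.trans hdb),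
      affT_apply_of_not_modEq hia hib, affT_apply_of_modEq_left hic]
    ring
  rw [affT_apply_of_not_modEq hic (fun h => hib (h.trans hdb)), affT_apply_of_not_modEq hia hib,
    affT_apply_of_not_modEq hic (fun h => hia (h.trans hea))]

theorem definedAt_of_definedAt_comp_affT {n a b c d : ℤ} {u : ℤ → ℤ} (hab : a < b)
    (hba : b - a < n) (hdc : d - c < n) (hca : ¬ c ≡ a [ZMOD n]) (hcb : ¬ c ≡ b [ZMOD n])
    (hdb : d ≡ b [ZMOD n]) (h : DefinedAt (u ∘ affT n a b) c d) :
    DefinedAt u c (d - b + a) := by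
  obtain ⟨hc, hd, hwin⟩ := h
  have hTc : affT n a b c = c := affT_apply_of_not_modEq hca hcb
  have hTd : affT n a b d = d - b + a := affT_apply_of_modEq_right
    (fun h => Int.not_modEq_of_lt_of_lt_add hab (by omega) (h.symm.trans hdb)) hdb
  refine ⟨by simpa only [comp_apply, hTc] using hc, by simpa only [comp_apply, hTd] using hd,
    fun i hci hie => ?_⟩
  have hTi : affT n a b i = i := affT_apply_of_not_modEq
    (fun h => Int.not_modEq_of_lt_of_lt_add hie (by omega) (h.trans (hdb.sub_add_modEq a).symm))
    (fun h => Int.not_modEq_of_lt_of_lt_add (by omega : i < d) (by omega) (h.trans hdb.symm))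
  simpa only [comp_apply, hTc, hTd, hTi] using hwin i hci (by omega)

theorem definedAt_comp_affT_of_definedAt {n a b c d : ℤ} {u : ℤ → ℤ}
    (hu : ∀ i, u (i + n) = u i + n) (hab : a < b) (hbc : b < c) (hba : b - a < n)
    (hce : c < d - b + a) (hca : ¬ c ≡ a [ZMOD n]) (hcb : ¬ c ≡ b [ZMOD n])
    (hdb : d ≡ b [ZMOD n]) (h₁ : DefinedAt u a b) (h₂ : DefinedAt (u ∘ affT n a b) c d) :
    DefinedAt (u ∘ affT n c (d - b + a)) a b := by
  obtain ⟨-, hb, hwin₁⟩ := h₁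
  obtain ⟨hc, hd, hwin₂⟩ := h₂
  have hab' : ¬ a ≡ b [ZMOD n] := Int.not_modEq_of_lt_of_lt_add hab (by omega)
  have hea : d - b + a ≡ a [ZMOD n] := hdb.sub_add_modEq a
  have hTc : affT n a b c = c := affT_apply_of_not_modEq hca hcb
  have hTd : affT n a b d = d - b + a :=
    affT_apply_of_modEq_right (fun h => hab' (h.symm.trans hdb)) hdb
  simp only [comp_apply, hTc, hTd] at hc hd hwin₂
  have hue : u (d - b + a) - (d - b + a) = u a - a := map_sub_self_eq_of_modEq hu hea.symm
  have hSa : affT n c (d - b + a) a = a - (d - b + a) + c :=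
    affT_apply_of_modEq_right (fun h => hca h.symm) hea.symm
  have huSa : u (a - (d - b + a) + c) - (a - (d - b + a) + c) = u c - c :=
    map_sub_self_eq_of_modEq hu (hea.symm.sub_add_modEq c).symm
  have hSb : affT n c (d - b + a) b = b :=
    affT_apply_of_not_modEq (fun h => hcb h.symm) (fun h => hab' (h.trans hea).symm)
  refine ⟨?_, ?_, fun i hai hib => ?_⟩
  · simp only [comp_apply, hSa]; linarith
  · simpa only [comp_apply, hSb] using hb
  have hia : ¬ i ≡ a [ZMOD n] := fun h => Int.not_modEq_of_lt_of_lt_add hai (by omega) h.symm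
  have hib' : ¬ i ≡ b [ZMOD n] := Int.not_modEq_of_lt_of_lt_add hib (by omega)
  have hji : d - b + i ≡ i [ZMOD n] := hdb.sub_add_modEq i
  have huj : u (d - b + i) - (d - b + i) = u i - i := map_sub_self_eq_of_modEq hu hji.symm
  have hTj : affT n a b (d - b + i) = d - b + i :=
    affT_apply_of_not_modEq (fun h => hia (hji.symm.trans h)) (fun h => hib' (hji.symm.trans h))
  have hwj := hwin₂ (d - b + i) (by omega) (by omega)
  rw [hTj] at hwj
  by_cases hic : i ≡ c [ZMOD n]
  · -- `u i < u c ≤ 0 < u b` forces `u i < u a`, and then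
    -- `u c < u (d - b + i) < u (d - b + a)` violates the condition at `d - b + i`
    have hui : u i - i = u c - c := map_sub_self_eq_of_modEq hu hic.symm
    exfalso
    rcases hwin₁ i hai hib with h | h <;> rcases hwj with h' | h' <;> linarith
  · have hSi : affT n c (d - b + a) i = i :=
      affT_apply_of_not_modEq hic (fun h => hia (h.trans hea))
    simp only [comp_apply, hSi, hSa, hSb]
    rcases hwin₁ i hai hib with h | h
    · exact Or.inl (by rcases hwj with h' | h' <;> linarith)
    · exact Or.inr h

theorem stmt17_general (k : ℤ) (u : ℤ → ℤ)
    (hu : IsAffinePerm (k + 1) u)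
    (a b c d : ℤ) (hab : a < b) (hbc : b < c) (hcd : c < d)
    (hba : b - a ≤ k) (hdc : d - c ≤ k)
    (hmod : b % (k + 1) = d % (k + 1))
    (hlen : b - a < d - c)
    (hdef : Def2 (k + 1) u a b c d) :
    Def2 (k + 1) u c (d - b + a) a b ∧
      (u ∘ affT (k + 1) a b) ∘ affT (k + 1) c d =
        (u ∘ affT (k + 1) c (d - b + a)) ∘ affT (k + 1) a b := by
  obtain ⟨-, hper, -⟩ := hu
  obtain ⟨h₁, h₂⟩ := hdef
  have hdb : d ≡ b [ZMOD k + 1] := hmod.symm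
  have hab' : ¬ a ≡ b [ZMOD k + 1] := Int.not_modEq_of_lt_of_lt_add hab (by omega)
  have hcb : ¬ c ≡ b [ZMOD k + 1] := fun h =>
    Int.not_modEq_of_lt_of_lt_add hcd (by omega) (h.trans hdb.symm)
  have hca : ¬ c ≡ a [ZMOD k + 1] := fun h =>
    Int.not_modEq_of_lt_of_lt_add (by omega : c < d - b + a) (by omega)
      (h.trans (hdb.sub_add_modEq a).symm)
  refine ⟨⟨definedAt_of_definedAt_comp_affT hab (by omega) (by omega) hca hcb hdb h₂,
    definedAt_comp_affT_of_definedAt hper hab hbc (by omega) (by omega) hca hcb hdb h₁ h₂⟩,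
    ?_⟩
  rw [comp_assoc, comp_assoc, affT_comp_affT_of_modEq hab' hca hcb hdb]

theorem stmt17 (k : ℤ) (hk : 1 ≤ k) (u : ℤ → ℤ)
    (hu : IsAffinePerm (k + 1) u) (hg : IsGrassmannian (k + 1) u)
    (a b c d : ℤ) (hab : a < b) (hbc : b < c) (hcd : c < d)
    (hba : b - a ≤ k) (hdc : d - c ≤ k)
    (hmod : b % (k + 1) = d % (k + 1))
    (hlen : b - a < d - c)
    (hua : u a ≤ 0)
    (hdef : Def2 (k + 1) u a b c d) :
    Def2 (k + 1) u c (d - b + a) a b ∧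
      (u ∘ affT (k + 1) a b) ∘ affT (k + 1) c d =
        (u ∘ affT (k + 1) c (d - b + a)) ∘ affT (k + 1) a b :=
  stmt17_general k u hu a b c d hab hbc hcd hba hdc hmod hlen hdef
end
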